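/- arXiv:2206.01533 — 7 statements merged into one kernel-verified Lean document; each statement's English description precedes it below -/
import Mathlib

section
/- For any size function ρ on a set E, the monk operation is idempotent: (ρ°)°(A) = ρ°(A) for all subsets A of E. -/
open scoped ENNReal

/-- A bornology on `E`, as a collection of "bounded" sets. -/
def IsBornology {E : Type*} (B : Set (Set E)) : Prop :=
  (∀ x : E, ∃ b ∈ B, x ∈ b) ∧
  (∀ b ∈ B, ∀ b' ∈ B, b ∪ b' ∈ B) ∧
  (∀ b b' : Set E, b ⊆ b' → b' ∈ B → b ∈ B)

/-- `ρ` is a size function. -/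
def IsSizeFunction {E : Type*} (ρ : Set E → ℝ≥0∞) : Prop :=
  ρ ∅ = 0 ∧ (∀ x : E, ρ {x} < ⊤) ∧ (∀ A A' : Set E, A ⊆ A' → ρ A ≤ ρ A')

/-- The monk of a size function. -/
noncomputable def monk {E : Type*} (ρ : Set E → ℝ≥0∞) (A : Set E) : ℝ≥0∞ :=
  sInf {t : ℝ≥0∞ | 0 < t ∧ ∃ S : Finset (Set E), (A ⊆ ⋃ s ∈ S, s) ∧ ∀ s ∈ S, ρ s ≤ t}

/-- The outer regularization `ρ⁺`. -/
noncomputable def sizePlus {E : Type*} [TopologicalSpace E] (ρ : Set E → ℝ≥0∞) (A : Set E) : ℝ≥0∞ :=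
  ⨅ (G : Set E) (_ : IsOpen G) (_ : A ⊆ G), ρ G

/-!
Since `ρ° ≤ ρ` and the monk is monotone in the size function, `ρ°° ≤ ρ°`. Conversely, if `A` is
covered by finitely many sets of `ρ°`-size `< t`, then each of them is covered by finitely many
sets of `ρ`-size `≤ t`, and together these form a finite cover of `A` witnessing `ρ° A ≤ t`.
-/

namespace monk

variable {E : Type*} {ρ : Set E → ℝ≥0∞} {A : Set E} {t : ℝ≥0∞}

theorem le_of_cover {S : Finset (Set E)} (ht : 0 < t) (hA : A ⊆ ⋃ s ∈ S, s)
    (hS : ∀ s ∈ S, ρ s ≤ t) : monk ρ A ≤ t :=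
  sInf_le ⟨ht, S, hA, hS⟩

theorem exists_cover_of_lt (h : monk ρ A < t) :
    ∃ S : Finset (Set E), (A ⊆ ⋃ s ∈ S, s) ∧ ∀ s ∈ S, ρ s ≤ t := by
  obtain ⟨u, ⟨-, S, hA, hS⟩, hut⟩ := sInf_lt_iff.1 h
  exact ⟨S, hA, fun s hs => (hS s hs).trans hut.le⟩

theorem le_of_cover_monk_lt {S : Finset (Set E)} (ht : 0 < t) (hA : A ⊆ ⋃ s ∈ S, s)
    (hS : ∀ s ∈ S, monk ρ s < t) : monk ρ A ≤ t := by
  choose! T hTcov hTle using fun s hs => exists_cover_of_lt (hS s hs)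
  refine le_of_cover (S := S.biUnion T) ht ?_ ?_
  · intro x hx
    obtain ⟨s, hs, hxs⟩ := Set.mem_iUnion₂.1 (hA hx)
    obtain ⟨u, hu, hxu⟩ := Set.mem_iUnion₂.1 (hTcov s hs hxs)
    exact Set.mem_iUnion₂.2 ⟨u, Finset.mem_biUnion.2 ⟨s, hs, hu⟩, hxu⟩
  · intro u hu
    obtain ⟨s, hs, hu⟩ := Finset.mem_biUnion.1 hu
    exact hTle s hs u hu

theorem le_self (ρ : Set E → ℝ≥0∞) (A : Set E) : monk ρ A ≤ ρ A :=
  le_of_forall_gt_imp_ge_of_dense fun _ hc =>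
    le_of_cover (S := {A}) (pos_of_gt hc) (by simp) (by simpa using hc.le)

theorem mono : Monotone (monk : (Set E → ℝ≥0∞) → Set E → ℝ≥0∞) := by
  intro σ ρ hσρ A
  apply sInf_le_sInf
  rintro t ⟨ht, S, hA, hS⟩
  exact ⟨ht, S, hA, fun s hs => (hσρ s).trans (hS s hs)⟩

theorem le_monk_monk (ρ : Set E → ℝ≥0∞) (A : Set E) : monk ρ A ≤ monk (monk ρ) A := by
  refine le_sInf ?_
  rintro t ⟨ht, S, hA, hS⟩
  exact le_of_forall_gt_imp_ge_of_dense fun t' ht' =>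
    le_of_cover_monk_lt (ht.trans ht') hA fun s hs => (hS s hs).trans_lt ht'

end monk

theorem stmt9_general {E : Type*} (ρ : Set E → ℝ≥0∞) :
    ∀ A : Set E, monk (monk ρ) A = monk ρ A :=
  fun A => le_antisymm (monk.mono (monk.le_self ρ) A) (monk.le_monk_monk ρ A)

theorem stmt9 {E : Type*} (ρ : Set E → ℝ≥0∞) (hρ : IsSizeFunction ρ) :
    ∀ A : Set E, monk (monk ρ) A = monk ρ A :=
  stmt9_general ρ
end

section
/- For any size function ρ on a set E, the monk ρ° is the greatest maxitive measure on 2^E below ρ: if ν is a maxitive measure with ν ≤ ρ pointwise, then ν ≤ ρ° pointwise. -/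
open scoped ENNReal

theorem stmt10 {E : Type*} (ρ ν : Set E → ℝ≥0∞)
    (hρ : IsSizeFunction ρ) (hν : IsSizeFunction ν)
    (hmax : ∀ A A' : Set E, ν (A ∪ A') = max (ν A) (ν A'))
    (hle : ∀ A : Set E, ν A ≤ ρ A) :
    ∀ A : Set E, ν A ≤ monk ρ A := by
  intro A
  apply le_sInf
  rintro t ⟨-, S, hcov, hbd⟩
  have key : ∀ S : Finset (Set E), (∀ s ∈ S, ρ s ≤ t) → ν (⋃ s ∈ S, s) ≤ t := by
    classical
    intro S
    induction S using Finset.induction with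
    | empty => intro _; simp [hν.1]
    | @insert a s hs ih =>
      intro hb
      rw [Finset.set_biUnion_insert, hmax]
      exact max_le ((hle a).trans (hb a (Finset.mem_insert_self a s)))
        (ih (fun x hx => hb x (Finset.mem_insert_of_mem hx)))
  exact (hν.2.2 _ _ hcov).trans (key S hbd)
end

section
/- If ρ is a closed size function on a topological space E (i.e., ρ(cl(A)) = ρ(A) for all A ⊆ E), then its monk ρ° is also closed: ρ°(cl(A)) = ρ°(A) for all A ⊆ E. -/
open scoped ENNReal

theorem stmt13 {E : Type*} [TopologicalSpace E] (ρ : Set E → ℝ≥0∞)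
    (hρ : IsSizeFunction ρ) (hclosed : ∀ A : Set E, ρ (closure A) = ρ A) :
    ∀ A : Set E, monk ρ (closure A) = monk ρ A := by
  classical
  intro A
  apply le_antisymm
  · -- any admissible t for A is admissible for closure A via closures
    apply sInf_le_sInf
    rintro t ⟨ht, S, hcov, hsize⟩
    refine ⟨ht, S.image closure, ?_, ?_⟩
    · have h1 : closure A ⊆ closure (⋃ s ∈ S, s) := closure_mono hcov
      have h2 : closure (⋃ s ∈ (S : Set (Set E)), s) = ⋃ s ∈ (S : Set (Set E)), closure s :=
        S.finite_toSet.closure_biUnion _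
      intro x hx
      have := h1 hx
      simp only [Set.mem_iUnion] at this ⊢
      rw [show (⋃ s ∈ S, s) = ⋃ s ∈ (S : Set (Set E)), s from rfl, h2] at this
      simp only [Set.mem_iUnion] at this
      obtain ⟨s, hs, hxs⟩ := this
      exact ⟨closure s, Finset.mem_image_of_mem _ hs, hxs⟩
    · intro s hs
      rw [Finset.mem_image] at hs
      obtain ⟨u, hu, rfl⟩ := hs
      rw [hclosed u]
      exact hsize u hu
  · -- monotonicity
    apply sInf_le_sInf
    rintro t ⟨ht, S, hcov, hsize⟩
    exact ⟨ht, S, subset_closure.trans hcov, hsize⟩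
end

section
/- Let ρ be a size function on a topological space E. For every compact subset K of E, ρ°(K) ≤ sup_{x ∈ K} ρ⁺({x}), where ρ⁺(A) = inf over open G ⊇ A of ρ(G). -/
open scoped ENNReal

section

variable {E : Type*} (ρ : Set E → ℝ≥0∞)

theorem monk_le_of_subset_biUnion {ι : Type*} {A : Set E} {t : ℝ≥0∞} (ht : 0 < t)
    (s : Finset ι) (U : ι → Set E) (hA : A ⊆ ⋃ i ∈ s, U i) (hU : ∀ i ∈ s, ρ (U i) ≤ t) :
    monk ρ A ≤ t := by
  classical
  refine sInf_le ⟨ht, s.image U, ?_, ?_⟩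
  · simpa only [Finset.set_biUnion_finset_image] using hA
  · simpa only [Finset.forall_mem_image] using hU

theorem exists_isOpen_mem_lt_of_sizePlus_singleton_lt [TopologicalSpace E] {x : E}
    {t : ℝ≥0∞} (h : sizePlus ρ {x} < t) : ∃ G, IsOpen G ∧ x ∈ G ∧ ρ G < t := by
  simpa only [sizePlus, iInf_lt_iff, Set.singleton_subset_iff, exists_prop] using h

end

theorem stmt14_general {E : Type*} [TopologicalSpace E] (ρ : Set E → ℝ≥0∞) :
    ∀ K : Set E, IsCompact K → monk ρ K ≤ ⨆ x ∈ K, sizePlus ρ {x} := by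
  intro K hK
  refine le_of_forall_gt_imp_ge_of_dense fun t ht => ?_
  have hG : ∀ x ∈ K, ∃ G, IsOpen G ∧ x ∈ G ∧ ρ G < t := fun x hx =>
    exists_isOpen_mem_lt_of_sizePlus_singleton_lt ρ ((le_biSup _ hx).trans_lt ht)
  choose! G hG_open hG_mem hG_lt using hG
  obtain ⟨s, hsK, hKs⟩ :=
    hK.elim_nhds_subcover G fun x hx => (hG_open x hx).mem_nhds (hG_mem x hx)
  exact monk_le_of_subset_biUnion ρ (pos_of_gt ht) s G hKs
    fun x hx => (hG_lt x (hsK x hx)).le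

theorem stmt14 {E : Type*} [TopologicalSpace E] (ρ : Set E → ℝ≥0∞)
    (hρ : IsSizeFunction ρ) :
    ∀ K : Set E, IsCompact K → monk ρ K ≤ ⨆ x ∈ K, sizePlus ρ {x} :=
  stmt14_general ρ
end

section
/- Let ρ be a weakly outer-continuous size function on a topological space E. Then for every compact subset K of E, ρ°(K) = sup_{x ∈ K} ρ({x}) and ρ°(K) < ∞. -/
open scoped ENNReal

/-!
The monk is at least `sup_{x ∈ K} ρ {x}` because every set of a cover of `K` contains some
singletons. Conversely, if `t` exceeds `ρ {x} = ρ⁺ {x}` for every `x ∈ K`, then each `x` has an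
open neighbourhood of size `< t`, and finitely many of them cover `K`; so the monk is at most `t`.
Taking `t = ⊤` instead yields a finite cover by sets of finite size, whence `monk ρ K < ⊤`.
-/

section Monk

variable {E : Type*} {ρ : Set E → ℝ≥0∞}

theorem monk_le_of_cover {A : Set E} {t : ℝ≥0∞} (ht : 0 < t) {S : Finset (Set E)}
    (hA : A ⊆ ⋃ s ∈ S, s) (hS : ∀ s ∈ S, ρ s ≤ t) : monk ρ A ≤ t :=
  sInf_le ⟨ht, S, hA, hS⟩

theorem monk_lt_top_of_cover {A : Set E} {S : Finset (Set E)} (hA : A ⊆ ⋃ s ∈ S, s)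
    (hS : ∀ s ∈ S, ρ s < ⊤) : monk ρ A < ⊤ := by
  have hsup : S.sup ρ < ⊤ := (Finset.sup_lt_iff ENNReal.zero_lt_top).2 hS
  calc monk ρ A ≤ S.sup ρ ⊔ 1 :=
        monk_le_of_cover (zero_lt_one.trans_le le_sup_right) hA
          fun s hs => (Finset.le_sup hs).trans le_sup_left
    _ < ⊤ := max_lt hsup ENNReal.one_lt_top

theorem iSup_singleton_le_monk (hρ : Monotone ρ) (A : Set E) :
    ⨆ x ∈ A, ρ {x} ≤ monk ρ A := by
  refine le_sInf ?_
  rintro t ⟨-, S, hA, hS⟩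
  refine iSup₂_le fun x hx => ?_
  obtain ⟨s, hs, hxs⟩ := Set.mem_iUnion₂.1 (hA hx)
  exact (hρ (Set.singleton_subset_iff.2 hxs)).trans (hS s hs)

variable [TopologicalSpace E]

theorem exists_isOpen_lt_of_sizePlus_lt {A : Set E} {b : ℝ≥0∞} (h : sizePlus ρ A < b) :
    ∃ G, IsOpen G ∧ A ⊆ G ∧ ρ G < b := by
  simpa only [sizePlus, iInf_lt_iff, exists_prop] using h

theorem IsCompact.exists_finset_cover_lt {K : Set E} (hK : IsCompact K) {b : ℝ≥0∞}
    (h : ∀ x ∈ K, sizePlus ρ {x} < b) :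
    ∃ S : Finset (Set E), K ⊆ ⋃ s ∈ S, s ∧ ∀ s ∈ S, ρ s < b := by
  have hnhds (x : K) : ∃ G, IsOpen G ∧ (x : E) ∈ G ∧ ρ G < b := by
    obtain ⟨G, hG, hxG, hGb⟩ := exists_isOpen_lt_of_sizePlus_lt (h x x.2)
    exact ⟨G, hG, Set.singleton_subset_iff.1 hxG, hGb⟩
  choose G hG hxG hGb using hnhds
  obtain ⟨F, hF⟩ := hK.elim_finite_subcover G hG
    fun x hx => Set.mem_iUnion.2 ⟨⟨x, hx⟩, hxG _⟩
  refine ⟨F.image G, fun x hx => ?_, ?_⟩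
  · obtain ⟨i, hi, hxi⟩ := Set.mem_iUnion₂.1 (hF hx)
    exact Set.mem_iUnion₂.2 ⟨G i, Finset.mem_image_of_mem G hi, hxi⟩
  · simpa only [Finset.forall_mem_image] using fun i _ => hGb i

theorem IsCompact.monk_le_iSup_sizePlus_singleton {K : Set E} (hK : IsCompact K) :
    monk ρ K ≤ ⨆ x ∈ K, sizePlus ρ {x} := by
  refine le_of_forall_gt_imp_ge_of_dense fun t ht => ?_
  obtain ⟨S, hKS, hS⟩ := hK.exists_finset_cover_lt fun x hx =>
    (le_iSup₂ (f := fun x (_ : x ∈ K) => sizePlus ρ {x}) x hx).trans_lt ht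
  exact monk_le_of_cover (pos_of_gt ht) hKS fun s hs => (hS s hs).le

end Monk

theorem stmt15 {E : Type*} [TopologicalSpace E] (ρ : Set E → ℝ≥0∞)
    (hρ : IsSizeFunction ρ)
    (hoc : ∀ K : Set E, IsCompact K → sizePlus ρ K = ρ K) :
    ∀ K : Set E, IsCompact K →
      monk ρ K = (⨆ x ∈ K, ρ {x}) ∧ monk ρ K < ⊤ := by
  obtain ⟨-, hfin, hmono⟩ := hρ
  have hsingle (x : E) : sizePlus ρ {x} = ρ {x} := hoc {x} isCompact_singleton
  intro K hK
  have hle : monk ρ K ≤ ⨆ x ∈ K, ρ {x} := by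
    simpa only [hsingle] using hK.monk_le_iSup_sizePlus_singleton (ρ := ρ)
  obtain ⟨S, hKS, hS⟩ := hK.exists_finset_cover_lt (ρ := ρ) (b := ⊤) fun x _ =>
    (hsingle x).trans_lt (hfin x)
  exact ⟨hle.antisymm (iSup_singleton_le_monk (fun _ _ => hmono _ _) K),
    monk_lt_top_of_cover hKS hS⟩
end

section
/- Let ρ be a weakly outer-continuous size function on a topological space E. Then E is locally bounded with respect to the bornology of ρ-bounded subsets: for every x and every open set G containing x, there is a neighborhood U of x with U ⊆ G and ρ°(U) < ∞. -/
open scoped ENNReal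

theorem stmt16 {E : Type*} [TopologicalSpace E] (ρ : Set E → ℝ≥0∞)
    (hρ : IsSizeFunction ρ)
    (hoc : ∀ K : Set E, IsCompact K → sizePlus ρ K = ρ K) :
    ∀ x : E, ∀ G : Set E, IsOpen G → x ∈ G →
      ∃ U : Set E, U ∈ nhds x ∧ U ⊆ G ∧ monk ρ U < ⊤ := by
  intro x G hG hxG
  obtain ⟨h0, h1, h2⟩ := hρ
  have hlt : sizePlus ρ {x} < ⊤ := (hoc {x} isCompact_singleton).le.trans_lt (h1 x)
  rw [sizePlus] at hlt
  obtain ⟨V, hV⟩ := iInf_lt_iff.mp hlt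
  obtain ⟨hVopen, hV⟩ := iInf_lt_iff.mp hV
  obtain ⟨hxV, hρV⟩ := iInf_lt_iff.mp hV
  refine ⟨V ∩ G, (hVopen.inter hG).mem_nhds ⟨hxV (Set.mem_singleton x), hxG⟩,
    Set.inter_subset_right, ?_⟩
  have : monk ρ (V ∩ G) ≤ ρ V + 1 := by
    apply sInf_le
    refine ⟨by simp, {V}, ?_, ?_⟩
    · simp [Set.inter_subset_left]
    · intro s hs
      simp only [Finset.mem_singleton] at hs
      simp [hs]
  exact this.trans_lt (ENNReal.add_lt_top.mpr ⟨hρV, ENNReal.one_lt_top⟩)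
end

section
/- Let ρ be a total weakly outer-continuous size function on a locally compact topological space E. Then E is locally bounded with respect to the bornology of totally ρ-bounded subsets: for every x and every open G containing x, there is a neighborhood U of x with U ⊆ G and ρ°(U) = 0. -/
open scoped ENNReal

/-!
Since `ρ {y} = 0` and `ρ` agrees with `ρ⁺` on the compact set `{y}`, every point has open
neighbourhoods of arbitrarily small size. A compact neighbourhood of `x` inside `G` is covered by
finitely many of them, so its monk vanishes.
-/

lemma exists_isOpen_superset_lt_of_sizePlus_lt {E : Type*} [TopologicalSpace E]
    {ρ : Set E → ℝ≥0∞} {A : Set E} {t : ℝ≥0∞} (h : sizePlus ρ A < t) :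
    ∃ G, IsOpen G ∧ A ⊆ G ∧ ρ G < t := by
  simpa only [sizePlus, iInf_lt_iff, exists_prop] using h

lemma monk_eq_zero_of_forall_finite_cover {E : Type*} {ρ : Set E → ℝ≥0∞} {A : Set E}
    (h : ∀ t : ℝ≥0∞, 0 < t → ∃ S : Finset (Set E), A ⊆ ⋃ s ∈ S, s ∧ ∀ s ∈ S, ρ s ≤ t) :
    monk ρ A = 0 := by
  refine sInf_eq_bot.mpr fun b hb => ?_
  obtain ⟨t, ht, htb⟩ := exists_between hb
  exact ⟨t, ⟨ht, h t ht⟩, htb⟩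

lemma IsCompact.monk_eq_zero {E : Type*} [TopologicalSpace E] {ρ : Set E → ℝ≥0∞} {K : Set E}
    (hK : IsCompact K) (h : ∀ y ∈ K, sizePlus ρ {y} = 0) : monk ρ K = 0 := by
  classical
  refine monk_eq_zero_of_forall_finite_cover fun t ht => ?_
  have hsmall : ∀ y ∈ K, ∃ V, IsOpen V ∧ {y} ⊆ V ∧ ρ V < t := fun y hy =>
    exists_isOpen_superset_lt_of_sizePlus_lt (by rwa [h y hy])
  choose! V hVo hyV hVt using hsmall
  obtain ⟨F, hFK, hKF⟩ := hK.elim_nhds_subcover V fun y hy =>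
    (hVo y hy).mem_nhds (hyV y hy rfl)
  refine ⟨F.image V, ?_, ?_⟩
  · rwa [Finset.set_biUnion_finset_image]
  · simp only [Finset.forall_mem_image]
    exact fun y hy => (hVt y (hFK y hy)).le

theorem stmt18_general {E : Type*} [TopologicalSpace E] [LocallyCompactSpace E]
    (ρ : Set E → ℝ≥0∞) (htotal : ∀ x : E, ρ {x} = 0)
    (hoc : ∀ K : Set E, IsCompact K → sizePlus ρ K = ρ K) :
    ∀ x : E, ∀ G : Set E, IsOpen G → x ∈ G →
      ∃ U : Set E, U ∈ nhds x ∧ U ⊆ G ∧ monk ρ U = 0 := by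
  intro x G hG hxG
  obtain ⟨K, hKx, hKG, hK⟩ := local_compact_nhds (hG.mem_nhds hxG)
  refine ⟨K, hKx, hKG, hK.monk_eq_zero fun y _ => ?_⟩
  rw [hoc _ isCompact_singleton, htotal y]

theorem stmt18 {E : Type*} [TopologicalSpace E] [LocallyCompactSpace E]
    (ρ : Set E → ℝ≥0∞) (hρ : IsSizeFunction ρ) (htotal : ∀ x : E, ρ {x} = 0)
    (hoc : ∀ K : Set E, IsCompact K → sizePlus ρ K = ρ K) :
    ∀ x : E, ∀ G : Set E, IsOpen G → x ∈ G →
      ∃ U : Set E, U ∈ nhds x ∧ U ⊆ G ∧ monk ρ U = 0 :=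
  stmt18_general ρ htotal hoc
end
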